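/- arXiv:2012.03770 — 2 statements merged into one kernel-verified Lean document; each statement's English description precedes it below -/
import Mathlib

section
/- Let X be an n×n matrix over a field, let i_1 < i_2 < ... < i_k be row indices, and suppose row i_j of X equals f(c_j) for j = 1,...,k, where c_1,...,c_k are pairwise distinct scalars and f is a function from {c_1,...,c_k} to row vectors of length n. Let X' be the matrix obtained from X by replacing, for each j = 1,...,k, row i_j by the row (c_j−c_1)(c_j−c_2)···(c_j−c_{j−1}) · D^{j−1}f(c_1,...,c_j), where D^{j−1}f(c_1,...,c_j) = Σ_{r=1}^{j} f(c_r)/∏_{s≠r, 1≤s≤j}(c_r − c_s) is the (j−1)-st divided difference of f with respect to the nodes c_1,...,c_j (for j = 1 the row is f(c_1) itself). Then det(X') = det(X). -/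
/-!
Each new row `X' (idx j)` is `f (c j)` plus a combination of the values `f (c r)`, `r < j`: the
factor `∏_{s<j} (c j - c s)` exactly cancels the weight of `f (c j)` in the divided difference.
Since `f (c r) = X (idx r)` and `idx` is increasing, `X'` arises from `X` by adding to every row a
combination of earlier rows, i.e. `X' = (1 + L) * X` with `L` strictly lower triangular.
-/

open Finset Submodule

namespace Matrix

variable {ι R : Type*} [Fintype ι] [DecidableEq ι] [LinearOrder ι] [CommRing R]

theorem det_add_mul_of_strictLowerTriangular (X L : Matrix ι ι R)
    (hL : ∀ i m, i ≤ m → L i m = 0) : (X + L * X).det = X.det := by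
  have htri : (1 + L).IsLowerTriangular := fun i m him => by
    rw [OrderDual.toDual_lt_toDual] at him
    simp [one_apply_ne him.ne, hL i m him.le]
  rw [show X + L * X = (1 + L) * X by rw [add_mul, one_mul], det_mul,
    det_of_isLowerTriangular _ htri]
  simp [hL]

theorem det_eq_of_forall_sub_mem_span_rows_lt (X X' : Matrix ι ι R)
    (h : ∀ i, X' i - X i ∈ span R (X '' Set.Iio i)) : X'.det = X.det := by
  choose L hL hX' using fun i => (Finsupp.mem_span_image_iff_linearCombination R).mp (h i)
  have hX'_eq : X' = X + of (fun i m => L i m) * X := by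
    ext i j
    have hrow := hX' i
    erw [Finsupp.linearCombination_apply, Finsupp.sum_fintype _ _ (by simp)] at hrow
    replace hrow := congrFun hrow j
    simp only [Finset.sum_apply, Pi.smul_apply, smul_eq_mul, Pi.sub_apply] at hrow
    simp [mul_apply, hrow]
  rw [hX'_eq]
  refine det_add_mul_of_strictLowerTriangular _ _ fun i m him => ?_
  exact Finsupp.notMem_support_iff.mp fun hm => him.not_gt (hL i hm)

end Matrix

theorem prod_Iio_smul_sum_Iic_sub_mem_span {ι F V : Type*} [LinearOrder ι]
    [LocallyFiniteOrderBot ι] [Field F] [AddCommGroup V] [Module F V]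
    {c : ι → F} (hc : Function.Injective c) (v : ι → V) (j : ι) :
    (∏ s ∈ Iio j, (c j - c s)) •
        ∑ r ∈ Iic j, (∏ s ∈ (Iic j).erase r, (c r - c s))⁻¹ • v r - v j ∈
      span F (v '' Set.Iio j) := by
  classical
  have hprod : ∏ s ∈ Iio j, (c j - c s) ≠ 0 :=
    prod_ne_zero_iff.mpr fun s hs => sub_ne_zero.mpr (hc.ne (mem_Iio.mp hs).ne')
  rw [← Iio_insert, sum_insert notMem_Iio_self, Iio_insert, Iic_erase, smul_add, smul_smul,
    mul_inv_cancel₀ hprod, one_smul, add_sub_cancel_left, smul_sum]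
  exact sum_mem fun r hr => smul_mem _ _ (smul_mem _ _
    (subset_span (Set.mem_image_of_mem v (mem_Iio.mp hr))))

/-- Determinant-preserving divided-difference row operations.  Let `X` be an
`n × n` matrix over a field whose rows `idx 0 < idx 1 < … < idx (k-1)` are `f (c 0), …,
f (c (k-1))` for pairwise distinct nodes `c j`.  Replacing, for each `j`, row `idx j` by
`(c j − c 0)⋯(c j − c (j-1))` times the `j`-th divided difference of `f` at the nodes
`c 0, …, c j` (and leaving all other rows unchanged) produces a matrix `X'` with
`det X' = det X`. -/
theorem stmt2 {F : Type*} [Field F] (n k : ℕ)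
    (X X' : Matrix (Fin n) (Fin n) F)
    (idx : Fin k → Fin n) (hidx : StrictMono idx)
    (c : Fin k → F) (hc : Function.Injective c)
    (f : F → (Fin n → F))
    (hX : ∀ j : Fin k, X (idx j) = f (c j))
    (hX'1 : ∀ r : Fin n, (∀ j : Fin k, idx j ≠ r) → X' r = X r)
    (hX'2 : ∀ j : Fin k,
      X' (idx j) = (∏ s ∈ Finset.Iio j, (c j - c s)) •
        ∑ r ∈ Finset.Iic j,
          (∏ s ∈ (Finset.Iic j).erase r, (c r - c s))⁻¹ • f (c r)) :
    X'.det = X.det := by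
  refine Matrix.det_eq_of_forall_sub_mem_span_rows_lt X X' fun i => ?_
  by_cases hi : ∃ j, idx j = i
  · obtain ⟨j, rfl⟩ := hi
    have hspan : (f ∘ c) '' Set.Iio j ⊆ X '' Set.Iio (idx j) := by
      rintro _ ⟨r, hr, rfl⟩
      exact ⟨idx r, hidx hr, hX r⟩
    rw [hX'2, hX]
    exact span_mono hspan (prod_Iio_smul_sum_Iic_sub_mem_span hc (f ∘ c) j)
  · rw [hX'1 i fun j hj => hi ⟨j, hj⟩, sub_self]
    exact zero_mem _
end

section
/- Let S ≥ 1, fix i ∈ {1,...,S}, and let ζ = e^{2πi/3}. For each pair (j,l) with j ∈ {1,...,S}, j ≠ i, and l ∈ {1,...,S}, fix an integer e_{j,l} and complex numbers F^{j,l}_+, F^{j,l}_−; for each l ∈ {1,...,S}, fix an integer d_l and complex numbers f^l_+, f^l_−, g^l_+, g^l_−. Define two 2S×2S complex matrices C_1 and C_2, organized into S×S blocks of size 2×2: for every j ≠ i, both C_1 and C_2 have the block in block-row j and block-column l equal to [[ζ^{e} F_+ − ζ^{−e} F_− , ζ^{e−2} F_+ − ζ^{−(e−2)} F_−], [ζ^{e+2}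 F_+ − ζ^{−(e+2)} F_− , ζ^{e} F_+ − ζ^{−e} F_−]] where e = e_{j,l} and F_± = F^{j,l}_±. In block-row i, with d = d_l, f_± = f^l_±, g_± = g^l_±: the block of C_1 in block-column l is [[(1+ζ)ζ^{d} g_+ − (1+ζ^{−1})ζ^{−d} g_− , (1+ζ)ζ^{d−2} g_+ − (1+ζ^{−1})ζ^{−(d−2)} g_−], [ζ^{d+2} f_+ − ζ^{−(d+2)} f_− , ζ^{d} f_+ − ζ^{−d} f_−]], and the block of C_2 in block-column l is [[ζ^{d} f_+ − ζ^{−d} f_− , ζ^{d−2} f_+ − ζ^{−(d−2)} f_−], [−ζ^{d+3} g_+ + ζ^{−(d+3)} g_− , −ζ^{d+1} g_+ + ζ^{−(d+1)} g_−]]. Then det(C_1) + det(C_2) = 0. -/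
/-!
Write `ζ = zeta3`, and let `P`, `Q : ℂ^S → ℂ^{2S}` put `c l` times `(1, ζ⁻²)`, resp. `(1, ζ²)`,
into block `l`. Every row of `C₁` and `C₂` is a combination of some `P u` and some `Q v`, and in
a block row `j ≠ i` both rows use the same `u` and `v`. View the determinant as an alternating
bilinear function `D` of the two rows of block `i`, the other rows being those of `C₁`. Then
`D (P x) (P y) = 0`, since all `2S` rows lie in `range P ⊔ span {Q v_j | j ≠ i}`, of dimension
at most `S + (S - 1)`; likewise `D (Q x) (Q y) = 0`. Expanding, `det C₁ + det C₂` becomes a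
combination of two values `D (P u) (Q v)` whose coefficients vanish because `1 + ζ + ζ² = 0`
and `ζ³ = 1`.
-/

open Complex Real

/-- `ζ = e^{2πi/3}`, the primitive cube root of unity. -/
noncomputable def zeta3 : ℂ := Complex.exp (2 * Real.pi * Complex.I / 3)

open Module Submodule

theorem LinearMap.IsAlt.apply_add_add {R M : Type*} [CommRing R] [AddCommGroup M] [Module R M]
    {B : M →ₗ[R] M →ₗ[R] R} (hB : B.IsAlt) {x x' y y' : M} (hx : B x x' = 0)
    (hy : B y y' = 0) : B (x + y) (x' + y') = B x y' - B x' y := by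
  simp only [map_add, LinearMap.add_apply, hx, hy, ← hB.neg x' y]
  ring

section detUpdateRows

variable {R n : Type*} [CommRing R] [Fintype n] [DecidableEq n]

noncomputable def Matrix.detUpdateRows (M : Matrix n n R) {r₀ r₁ : n} (h : r₀ ≠ r₁) :
    (n → R) →ₗ[R] (n → R) →ₗ[R] R :=
  LinearMap.mk₂ R (fun x y => ((M.updateRow r₀ x).updateRow r₁ y).det)
    (fun x x' y => by
      rw [Matrix.updateRow_comm _ h, Matrix.det_updateRow_add, Matrix.updateRow_comm _ h.symm,
        Matrix.updateRow_comm _ h.symm])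
    (fun c x y => by
      rw [Matrix.updateRow_comm _ h, Matrix.det_updateRow_smul, Matrix.updateRow_comm _ h.symm,
        smul_eq_mul])
    (fun _ _ _ => Matrix.det_updateRow_add _ _ _ _)
    (fun _ _ _ => Matrix.det_updateRow_smul _ _ _ _)

theorem Matrix.detUpdateRows_apply (M : Matrix n n R) {r₀ r₁ : n} (h : r₀ ≠ r₁) (x y : n → R) :
    M.detUpdateRows h x y = ((M.updateRow r₀ x).updateRow r₁ y).det := rfl

theorem Matrix.isAlt_detUpdateRows (M : Matrix n n R) {r₀ r₁ : n} (h : r₀ ≠ r₁) :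
    (M.detUpdateRows h).IsAlt := fun _ =>
  Matrix.det_zero_of_row_eq h (by simp [Matrix.updateRow_ne h])

theorem Matrix.det_eq_detUpdateRows {M N : Matrix n n R} {r₀ r₁ : n} (h : r₀ ≠ r₁)
    (hN : ∀ r, r ≠ r₀ → r ≠ r₁ → N r = M r) : N.det = M.detUpdateRows h (N r₀) (N r₁) := by
  rw [Matrix.detUpdateRows_apply]
  congr
  ext r : 1
  by_cases h₁ : r = r₁
  · simp [h₁]
  by_cases h₀ : r = r₀
  · simp [h₀, h]
  simp [h₀, h₁, hN r h₀ h₁]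

end detUpdateRows

section Field

variable {K : Type*} [Field K]

theorem Matrix.det_eq_zero_of_forall_row_mem {n : Type*} [Fintype n] [DecidableEq n]
    (M : Matrix n n K) (W : Submodule K (n → K)) (hW : finrank K W < Fintype.card n)
    (hM : ∀ r, M r ∈ W) : M.det = 0 :=
  Matrix.det_eq_zero_of_not_linearIndependent_rows fun hli => hW.not_ge <|
    (LinearIndependent.of_comp W.subtype (v := fun r => ⟨M r, hM r⟩) hli).fintype_card_le_finrank

variable {S : ℕ}

theorem Matrix.detUpdateRows_map_map_eq_zero (M : Matrix (Fin S × Fin 2) (Fin S × Fin 2) K)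
    {i : Fin S} (hi : ((i, 0) : Fin S × Fin 2) ≠ (i, 1))
    (U V : (Fin S → K) →ₗ[K] (Fin S × Fin 2 → K)) (a b : Fin S → Fin S → K)
    (hM : ∀ j, j ≠ i → ∀ ε, M (j, ε) ∈ span K {U (a j), V (b j)}) (x y : Fin S → K) :
    M.detUpdateRows hi (U x) (U y) = 0 := by
  let B := span K (Set.range fun j : {j // j ≠ i} => V (b j))
  apply Matrix.det_eq_zero_of_forall_row_mem _ (LinearMap.range U ⊔ B)
  · have := i.pos
    calc finrank K ↥(LinearMap.range U ⊔ B)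
        ≤ finrank K (LinearMap.range U) + finrank K B :=
          Submodule.finrank_add_le_finrank_add_finrank _ _
      _ ≤ S + (S - 1) := by
          gcongr
          · exact (LinearMap.finrank_range_le U).trans (by simp)
          · exact (finrank_range_le_card _).trans (by simp [Fintype.card_subtype_compl])
      _ < Fintype.card (Fin S × Fin 2) := by simp; omega
  · rintro ⟨j, ε⟩
    by_cases hj : j = i
    · subst hj
      fin_cases ε
      · simpa [Matrix.updateRow_ne hi] using mem_sup_left (LinearMap.mem_range_self U x)
      · simpa using mem_sup_left (LinearMap.mem_range_self U y)
    · rw [Matrix.updateRow_ne (by simp [hj]), Matrix.updateRow_ne (by simp [hj])]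
      refine span_le.2 (Set.insert_subset_iff.2 ⟨?_, ?_⟩) (hM j hj ε)
      · exact mem_sup_left (LinearMap.mem_range_self U _)
      · exact Set.singleton_subset_iff.2 (mem_sup_right (subset_span ⟨⟨j, hj⟩, rfl⟩))

def twistedRow (z : K) (k : ℤ) : (Fin S → K) →ₗ[K] (Fin S × Fin 2 → K) where
  toFun c p := z ^ (k * (p.2 : ℤ)) * c p.1
  map_add' c c' := by ext p; simp [mul_add]
  map_smul' a c := by ext p; simp [mul_left_comm]

theorem twistedRow_apply (z : K) (k : ℤ) (c : Fin S → K) (p : Fin S × Fin 2) :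
    twistedRow z k c p = z ^ (k * (p.2 : ℤ)) * c p.1 := rfl

end Field

theorem zeta3_isPrimitiveRoot : IsPrimitiveRoot zeta3 3 := by
  simpa [zeta3] using Complex.isPrimitiveRoot_exp 3 (by norm_num)

theorem zeta3_ne_zero : zeta3 ≠ 0 := Complex.exp_ne_zero _

theorem zeta3_pow_three : zeta3 ^ 3 = 1 := zeta3_isPrimitiveRoot.pow_eq_one

theorem one_add_zeta3_add_sq : 1 + zeta3 + zeta3 ^ 2 = 0 := by
  simpa [Finset.sum_range_succ] using zeta3_isPrimitiveRoot.geom_sum_eq_zero (by norm_num)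

theorem zeta3_inv : zeta3⁻¹ = zeta3 ^ 2 :=
  inv_eq_of_mul_eq_one_right (by rw [← pow_succ', zeta3_pow_three])

theorem zeta3_zpow_eq_zpow_emod (m : ℤ) : zeta3 ^ m = zeta3 ^ (m % 3) := by
  conv_lhs => rw [← Int.mul_ediv_add_emod m 3]
  simp [zpow_add₀ zeta3_ne_zero, zpow_mul, zeta3_pow_three]

theorem stmt7_general (S : ℕ) (i : Fin S)
    (e : Fin S → Fin S → ℤ) (Fp Fm : Fin S → Fin S → ℂ)
    (d : Fin S → ℤ) (fp fm gp gm : Fin S → ℂ)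
    (C1 C2 : Matrix (Fin S × Fin 2) (Fin S × Fin 2) ℂ)
    (hC1off : ∀ j : Fin S, j ≠ i → ∀ (ε : Fin 2) (l : Fin S) (ε' : Fin 2),
      C1 (j, ε) (l, ε') =
        zeta3 ^ (e j l + 2 * (ε : ℤ) - 2 * (ε' : ℤ)) * Fp j l -
          zeta3 ^ (-(e j l + 2 * (ε : ℤ) - 2 * (ε' : ℤ))) * Fm j l)
    (hC2off : ∀ j : Fin S, j ≠ i → ∀ (ε : Fin 2) (l : Fin S) (ε' : Fin 2),
      C2 (j, ε) (l, ε') = C1 (j, ε) (l, ε'))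
    (hC1i0 : ∀ (l : Fin S) (ε' : Fin 2),
      C1 (i, 0) (l, ε') =
        (1 + zeta3) * zeta3 ^ (d l - 2 * (ε' : ℤ)) * gp l -
          (1 + zeta3⁻¹) * zeta3 ^ (-(d l - 2 * (ε' : ℤ))) * gm l)
    (hC1i1 : ∀ (l : Fin S) (ε' : Fin 2),
      C1 (i, 1) (l, ε') =
        zeta3 ^ (d l + 2 - 2 * (ε' : ℤ)) * fp l -
          zeta3 ^ (-(d l + 2 - 2 * (ε' : ℤ))) * fm l)
    (hC2i0 : ∀ (l : Fin S) (ε' : Fin 2),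
      C2 (i, 0) (l, ε') =
        zeta3 ^ (d l - 2 * (ε' : ℤ)) * fp l -
          zeta3 ^ (-(d l - 2 * (ε' : ℤ))) * fm l)
    (hC2i1 : ∀ (l : Fin S) (ε' : Fin 2),
      C2 (i, 1) (l, ε') =
        -(zeta3 ^ (d l + 3 - 2 * (ε' : ℤ)) * gp l) +
          zeta3 ^ (-(d l + 3 - 2 * (ε' : ℤ))) * gm l) :
    C1.det + C2.det = 0 := by
  have hz := zeta3_ne_zero
  set P := twistedRow (S := S) zeta3 (-2)
  set Q := twistedRow (S := S) zeta3 2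
  have hoff : ∀ j, j ≠ i → ∀ ε, C1 (j, ε) ∈
      span ℂ {P fun l => zeta3 ^ e j l * Fp j l, Q fun l => zeta3 ^ (-e j l) * Fm j l} := by
    refine fun j hj ε => mem_span_pair.2 ⟨zeta3 ^ (2 * (ε : ℤ)), -zeta3 ^ (-(2 * (ε : ℤ))), ?_⟩
    ext ⟨l, ε'⟩
    simp [P, Q, twistedRow_apply, hC1off j hj, zpow_add₀ hz, zpow_sub₀ hz, zpow_neg, neg_mul]
    ring
  set gp' : Fin S → ℂ := fun l => zeta3 ^ d l * gp l
  set gm' : Fin S → ℂ := fun l => zeta3 ^ (-d l) * gm l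
  set fp' : Fin S → ℂ := fun l => zeta3 ^ d l * fp l
  set fm' : Fin S → ℂ := fun l => zeta3 ^ (-d l) * fm l
  obtain ⟨h10, h11, h20, h21⟩ :
      C1 (i, 0) = P ((1 + zeta3) • gp') + Q (-(1 + zeta3⁻¹) • gm') ∧
      C1 (i, 1) = P (zeta3 ^ (2 : ℤ) • fp') + Q (-zeta3 ^ (-2 : ℤ) • fm') ∧
      C2 (i, 0) = P fp' + Q (-fm') ∧
      C2 (i, 1) = P (-zeta3 ^ (3 : ℤ) • gp') + Q (zeta3 ^ (-3 : ℤ) • gm') := by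
    refine ⟨?_, ?_, ?_, ?_⟩ <;> ext ⟨l, ε'⟩ <;>
      simp [P, Q, gp', gm', fp', fm', twistedRow_apply, hC1i0, hC1i1, hC2i0, hC2i1,
        zpow_add₀ hz, zpow_sub₀ hz, zpow_neg, neg_mul] <;> ring
  have hC2 : ∀ r, r ≠ (i, 0) → r ≠ (i, 1) → C2 r = C1 r := by
    rintro ⟨j, ε⟩ h₀ h₁
    have hj : j ≠ i := by rintro rfl; fin_cases ε <;> simp_all
    exact funext fun ⟨l, ε'⟩ => hC2off j hj ε l ε'
  have hi : ((i, 0) : Fin S × Fin 2) ≠ (i, 1) := by simp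
  set D := C1.detUpdateRows hi
  have hPP := C1.detUpdateRows_map_map_eq_zero hi P Q _ _ hoff
  have hQQ := C1.detUpdateRows_map_map_eq_zero hi Q P _ _ fun j hj ε => by
    simpa only [Set.pair_comm] using hoff j hj ε
  have hD : ∀ x x' y y', D (P x + Q y) (P x' + Q y') = D (P x) (Q y') - D (P x') (Q y) :=
    fun x x' y y' => (C1.isAlt_detUpdateRows hi).apply_add_add (hPP x x') (hQQ y y')
  rw [Matrix.det_eq_detUpdateRows hi fun _ _ _ => rfl, Matrix.det_eq_detUpdateRows hi hC2,
    h10, h11, h20, h21, hD, hD]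
  simp only [map_smul, map_neg, LinearMap.smul_apply, smul_eq_mul]
  rw [zeta3_zpow_eq_zpow_emod (-2), zeta3_zpow_eq_zpow_emod 3, zeta3_zpow_eq_zpow_emod (-3)]
  norm_num [zeta3_inv]
  linear_combination (D (P fp') (Q gm') - D (P gp') (Q fm')) * one_add_zeta3_add_sq +
    zeta3 * D (P fp') (Q gm') * zeta3_pow_three

/-- The `2S × 2S` block matrices `C₁` and `C₂` (indexed by pairs
`(block, ε) ∈ Fin S × Fin 2`), which agree in every block row `j ≠ i` with the standard
block pattern `ζ^{e+2ε−2ε'} F₊ − ζ^{−(e+2ε−2ε')} F₋`, and whose `i`-th block rows are as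
described, satisfy `det C₁ + det C₂ = 0`. -/
theorem stmt7 (S : ℕ) (hS : 1 ≤ S) (i : Fin S)
    (e : Fin S → Fin S → ℤ) (Fp Fm : Fin S → Fin S → ℂ)
    (d : Fin S → ℤ) (fp fm gp gm : Fin S → ℂ)
    (C1 C2 : Matrix (Fin S × Fin 2) (Fin S × Fin 2) ℂ)
    (hC1off : ∀ j : Fin S, j ≠ i → ∀ (ε : Fin 2) (l : Fin S) (ε' : Fin 2),
      C1 (j, ε) (l, ε') =
        zeta3 ^ (e j l + 2 * (ε : ℤ) - 2 * (ε' : ℤ)) * Fp j l -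
          zeta3 ^ (-(e j l + 2 * (ε : ℤ) - 2 * (ε' : ℤ))) * Fm j l)
    (hC2off : ∀ j : Fin S, j ≠ i → ∀ (ε : Fin 2) (l : Fin S) (ε' : Fin 2),
      C2 (j, ε) (l, ε') = C1 (j, ε) (l, ε'))
    (hC1i0 : ∀ (l : Fin S) (ε' : Fin 2),
      C1 (i, 0) (l, ε') =
        (1 + zeta3) * zeta3 ^ (d l - 2 * (ε' : ℤ)) * gp l -
          (1 + zeta3⁻¹) * zeta3 ^ (-(d l - 2 * (ε' : ℤ))) * gm l)
    (hC1i1 : ∀ (l : Fin S) (ε' : Fin 2),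
      C1 (i, 1) (l, ε') =
        zeta3 ^ (d l + 2 - 2 * (ε' : ℤ)) * fp l -
          zeta3 ^ (-(d l + 2 - 2 * (ε' : ℤ))) * fm l)
    (hC2i0 : ∀ (l : Fin S) (ε' : Fin 2),
      C2 (i, 0) (l, ε') =
        zeta3 ^ (d l - 2 * (ε' : ℤ)) * fp l -
          zeta3 ^ (-(d l - 2 * (ε' : ℤ))) * fm l)
    (hC2i1 : ∀ (l : Fin S) (ε' : Fin 2),
      C2 (i, 1) (l, ε') =
        -(zeta3 ^ (d l + 3 - 2 * (ε' : ℤ)) * gp l) +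
          zeta3 ^ (-(d l + 3 - 2 * (ε' : ℤ))) * gm l) :
    C1.det + C2.det = 0 :=
  stmt7_general S i e Fp Fm d fp fm gp gm C1 C2 hC1off hC2off hC1i0 hC1i1 hC2i0 hC2i1
end
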